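/- arXiv:2307.02891 — 4 statements merged into one kernel-verified Lean document; each statement's English description precedes it below -/
import Mathlib

section
/- Let 𝓔 and 𝓩 be nonempty finite types, P a channel, θ' a fully supported distribution on 𝓔, and z : Fin M → 𝓩 samples such that for every i there exists e with P (z i) e > 0. Then for every distribution θ on 𝓔, the EM surrogate can be rewritten in terms of the BaBE update and the empirical frequencies: Q(θ, θ') = M · Σ_{e ∈ 𝓔} T(θ') e · log (θ e). -/
open Finset Real Filter
open scoped Classical

/-- Posterior weight `W_{θ'}(w, e) = P w e * θ' e / ∑ e', P w e' * θ' e'`. -/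
noncomputable def West {𝓔 𝓩 : Type*} [Fintype 𝓔] (P : 𝓩 → 𝓔 → ℝ) (θ' : 𝓔 → ℝ)
    (w : 𝓩) (e : 𝓔) : ℝ :=
  P w e * θ' e / ∑ e' : 𝓔, P w e' * θ' e'

/-- EM surrogate `Q(θ, θ') = ∑ i, ∑ e, W_{θ'}(z i, e) * log (θ e)`. -/
noncomputable def Qsur {𝓔 𝓩 : Type*} [Fintype 𝓔] (P : 𝓩 → 𝓔 → ℝ) {M : ℕ}
    (z : Fin M → 𝓩) (θ θ' : 𝓔 → ℝ) : ℝ :=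
  ∑ i : Fin M, ∑ e : 𝓔, West P θ' (z i) e * Real.log (θ e)

/-- Empirical frequency `φ(w) = |{i : z i = w}| / M`. -/
noncomputable def emp {𝓩 : Type*} {M : ℕ} (z : Fin M → 𝓩) (w : 𝓩) : ℝ :=
  ((Finset.univ.filter (fun i : Fin M => z i = w)).card : ℝ) / M

/-- BaBE update `T(θ') e = ∑ w, φ(w) * W_{θ'}(w, e)`. -/
noncomputable def babe {𝓔 𝓩 : Type*} [Fintype 𝓔] [Fintype 𝓩] (P : 𝓩 → 𝓔 → ℝ) {M : ℕ}
    (z : Fin M → 𝓩) (θ' : 𝓔 → ℝ) (e : 𝓔) : ℝ :=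
  ∑ w : 𝓩, emp z w * West P θ' w e

/-- Log-likelihood `L(θ) = ∑ i, log (∑ e, P (z i) e * θ e)`. -/
noncomputable def loglik {𝓔 𝓩 : Type*} [Fintype 𝓔] (P : 𝓩 → 𝓔 → ℝ) {M : ℕ}
    (z : Fin M → 𝓩) (θ : 𝓔 → ℝ) : ℝ :=
  ∑ i : Fin M, Real.log (∑ e : 𝓔, P (z i) e * θ e)

/-
Regrouping the sum over the samples `i` by the observed value `w = z i` turns each term into
`#{i | z i = w} = M · φ(w)` copies of the same inner sum over `e`; exchanging the sums over `w`
and `e` then collects the coefficient of `log (θ e)` into `M · T(θ') e`.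
-/

theorem sum_comp_eq_sum_card_fiber_mul {ι κ : Type*} [Fintype ι] [Fintype κ] (z : ι → κ)
    (g : κ → ℝ) : ∑ i, g (z i) = ∑ w, (#{i | z i = w} : ℝ) * g w := by
  rw [← sum_fiberwise univ z]
  refine sum_congr rfl fun w _ => ?_
  rw [← nsmul_eq_mul, ← sum_const]
  exact sum_congr rfl fun i hi => by rw [(mem_filter.mp hi).2]

theorem sum_comp_eq_mul_sum_emp_mul {𝓩 : Type*} [Fintype 𝓩] {M : ℕ} (hM : M ≠ 0)
    (z : Fin M → 𝓩) (g : 𝓩 → ℝ) : ∑ i, g (z i) = M * ∑ w, emp z w * g w := by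
  rw [sum_comp_eq_sum_card_fiber_mul, mul_sum]
  refine sum_congr rfl fun w _ => ?_
  rw [emp, ← mul_assoc, mul_div_cancel₀ _ (Nat.cast_ne_zero.mpr hM)]

theorem stmt2_general {𝓔 𝓩 : Type*} [Fintype 𝓔] [Fintype 𝓩]
    (P : 𝓩 → 𝓔 → ℝ)
    (θ' : 𝓔 → ℝ)
    {M : ℕ} (hM : 1 ≤ M) (z : Fin M → 𝓩)
    (θ : 𝓔 → ℝ) :
    Qsur P z θ θ' = (M : ℝ) * ∑ e : 𝓔, babe P z θ' e * Real.log (θ e) := by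
  rw [Qsur, sum_comp_eq_mul_sum_emp_mul (by omega) z fun w => ∑ e, West P θ' w e * log (θ e)]
  congr 1
  simp only [babe, mul_sum, sum_mul]
  rw [sum_comm]
  exact sum_congr rfl fun w _ => sum_congr rfl fun e _ => (mul_assoc _ _ _).symm

theorem stmt2 {𝓔 𝓩 : Type*} [Fintype 𝓔] [Fintype 𝓩] [Nonempty 𝓔] [Nonempty 𝓩]
    (P : 𝓩 → 𝓔 → ℝ) (hPnn : ∀ w e, 0 ≤ P w e) (hPsum : ∀ e, ∑ w : 𝓩, P w e = 1)
    (θ' : 𝓔 → ℝ) (hθ'pos : ∀ e, 0 < θ' e) (hθ'sum : ∑ e : 𝓔, θ' e = 1)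
    {M : ℕ} (hM : 1 ≤ M) (z : Fin M → 𝓩)
    (hz : ∀ i : Fin M, ∃ e : 𝓔, 0 < P (z i) e)
    (θ : 𝓔 → ℝ) (hθnn : ∀ e, 0 ≤ θ e) (hθsum : ∑ e : 𝓔, θ e = 1) :
    Qsur P z θ θ' = (M : ℝ) * ∑ e : 𝓔, babe P z θ' e * Real.log (θ e) :=
  stmt2_general P θ' hM z θ
end

section
/- (Likelihood ascent of the BaBE/EM step.) Let 𝓔 and 𝓩 be nonempty finite types, P a channel with P w e > 0 for all w ∈ 𝓩 and e ∈ 𝓔, θ' a fully supported distribution on 𝓔, and z : Fin M → 𝓩 samples. Then applying one BaBE update does not decrease the log-likelihood: L(T(θ')) ≥ L(θ'). -/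
open Finset Real Filter
open scoped Classical

/-!
The usual EM argument. Jensen's inequality for `log`, with the posterior weights `W_{θ'}(z i, ·)`
as weights, gives `L(θ) - L(θ') ≥ Q(θ, θ') - Q(θ', θ')` for every fully supported `θ`. Since
`T(θ')` is the average of the posteriors over the samples, for `θ = T(θ')` the right-hand side is
`M · KL(T(θ') ‖ θ')`, which is nonnegative by Gibbs' inequality.
-/

theorem sum_mul_log_sub_nonneg {ι : Type*} [Fintype ι] {p q : ι → ℝ} (hp : ∀ i, 0 < p i)
    (hq : ∀ i, 0 < q i) (hsum : ∑ i, q i ≤ ∑ i, p i) :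
    0 ≤ ∑ i, p i * (log (p i) - log (q i)) := by
  have hterm : ∀ i, p i * (log (q i) - log (p i)) ≤ q i - p i := fun i => by
    have hlog := log_le_sub_one_of_pos (div_pos (hq i) (hp i))
    rw [log_div (hq i).ne' (hp i).ne'] at hlog
    calc p i * (log (q i) - log (p i)) ≤ p i * (q i / p i - 1) := by gcongr; exact (hp i).le
      _ = q i - p i := by rw [mul_sub, mul_div_cancel₀ _ (hp i).ne', mul_one]
  have := sum_le_sum fun i (_ : i ∈ univ) => hterm i
  rw [sum_sub_distrib] at this
  simp only [mul_sub, sum_sub_distrib] at this ⊢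
  linarith

theorem sum_comp_eq_mul_sum_emp {𝓩 : Type*} [Fintype 𝓩] {M : ℕ} (z : Fin M → 𝓩)
    (f : 𝓩 → ℝ) : ∑ i, f (z i) = M * ∑ w, emp z w * f w := by
  obtain rfl | hM := Nat.eq_zero_or_pos M
  · simp
  rw [← sum_fiberwise univ z, mul_sum]
  refine sum_congr rfl fun w _ => ?_
  rw [sum_congr rfl fun i hi => by rw [(mem_filter.1 hi).2], sum_const, nsmul_eq_mul, emp]
  field_simp

section Posterior

variable {𝓔 𝓩 : Type*} [Fintype 𝓔] {P : 𝓩 → 𝓔 → ℝ} {θ' : 𝓔 → ℝ}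

theorem sum_mul_pos_of_pos [Nonempty 𝓔] {w : 𝓩} (hP : ∀ e, 0 < P w e) (hθ' : ∀ e, 0 < θ' e) :
    0 < ∑ e, P w e * θ' e :=
  sum_pos (fun e _ => mul_pos (hP e) (hθ' e)) univ_nonempty

theorem West_pos [Nonempty 𝓔] {w : 𝓩} (hP : ∀ e, 0 < P w e) (hθ' : ∀ e, 0 < θ' e) (e : 𝓔) :
    0 < West P θ' w e :=
  div_pos (mul_pos (hP e) (hθ' e)) (sum_mul_pos_of_pos hP hθ')

theorem sum_West_eq_one {w : 𝓩} (hw : ∑ e, P w e * θ' e ≠ 0) : ∑ e, West P θ' w e = 1 := by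
  simp only [West, ← sum_div, div_self hw]

theorem sum_West_mul_log_sub_le [Nonempty 𝓔] {w : 𝓩} (hP : ∀ e, 0 < P w e)
    (hθ' : ∀ e, 0 < θ' e) {θ : 𝓔 → ℝ} (hθ : ∀ e, 0 < θ e) :
    ∑ e, West P θ' w e * (log (θ e) - log (θ' e))
      ≤ log (∑ e, P w e * θ e) - log (∑ e, P w e * θ' e) := by
  have hD := sum_mul_pos_of_pos hP hθ'
  have hjensen := (strictConcaveOn_log_Ioi.concaveOn).le_map_sum (t := univ)
    (fun e _ => (West_pos hP hθ' e).le) (sum_West_eq_one hD.ne')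
    (fun e _ => Set.mem_Ioi.2 (div_pos (hθ e) (hθ' e)))
  have hmean : ∑ e, West P θ' w e * (θ e / θ' e) = (∑ e, P w e * θ e) / ∑ e, P w e * θ' e := by
    rw [sum_div]
    refine sum_congr rfl fun e _ => ?_
    unfold West
    field_simp [(hθ' e).ne']
  simp only [smul_eq_mul, hmean, log_div (hθ _).ne' (hθ' _).ne'] at hjensen
  rwa [log_div (sum_mul_pos_of_pos hP hθ).ne' hD.ne'] at hjensen

end Posterior

section Likelihood

variable {𝓔 𝓩 : Type*} [Fintype 𝓔] {P : 𝓩 → 𝓔 → ℝ} {θ' : 𝓔 → ℝ} {M : ℕ}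

theorem Qsur_sub_Qsur_le_loglik_sub [Nonempty 𝓔] (hP : ∀ w e, 0 < P w e) (hθ' : ∀ e, 0 < θ' e)
    (z : Fin M → 𝓩) {θ : 𝓔 → ℝ} (hθ : ∀ e, 0 < θ e) :
    Qsur P z θ θ' - Qsur P z θ' θ' ≤ loglik P z θ - loglik P z θ' := by
  simp only [Qsur, loglik, ← sum_sub_distrib, ← mul_sub]
  exact sum_le_sum fun i _ => sum_West_mul_log_sub_le (hP (z i)) hθ' hθ

variable [Fintype 𝓩]

theorem sum_West_comp_eq_mul_babe (z : Fin M → 𝓩) (e : 𝓔) :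
    ∑ i, West P θ' (z i) e = M * babe P z θ' e :=
  sum_comp_eq_mul_sum_emp z (West P θ' · e)

theorem babe_pos [Nonempty 𝓔] (hP : ∀ w e, 0 < P w e) (hθ' : ∀ e, 0 < θ' e) (hM : 0 < M)
    (z : Fin M → 𝓩) (e : 𝓔) : 0 < babe P z θ' e := by
  have hsum : 0 < ∑ i, West P θ' (z i) e :=
    sum_pos (fun i _ => West_pos (hP (z i)) hθ' e) (univ_nonempty_iff.2 ⟨⟨0, hM⟩⟩)
  rw [sum_West_comp_eq_mul_babe] at hsum
  exact pos_of_mul_pos_right hsum (Nat.cast_nonneg M)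

theorem sum_babe_eq_one (hD : ∀ w, ∑ e, P w e * θ' e ≠ 0) (hM : 0 < M) (z : Fin M → 𝓩) :
    ∑ e, babe P z θ' e = 1 := by
  have hcount : ∑ e, ∑ i, West P θ' (z i) e = M := by
    simp [sum_comm (γ := 𝓔), sum_West_eq_one (hD _)]
  simp only [sum_West_comp_eq_mul_babe, ← mul_sum] at hcount
  exact (mul_eq_left₀ (Nat.cast_ne_zero.2 hM.ne')).1 hcount

theorem Qsur_babe_sub_Qsur (z : Fin M → 𝓩) :
    Qsur P z (babe P z θ') θ' - Qsur P z θ' θ'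
      = M * ∑ e, babe P z θ' e * (log (babe P z θ' e) - log (θ' e)) := by
  simp only [Qsur, ← sum_sub_distrib, ← mul_sub]
  rw [sum_comm, mul_sum]
  refine sum_congr rfl fun e _ => ?_
  rw [← sum_mul, sum_West_comp_eq_mul_babe, mul_assoc]

end Likelihood

theorem stmt8_general {𝓔 𝓩 : Type*} [Fintype 𝓔] [Fintype 𝓩] [Nonempty 𝓔]
    (P : 𝓩 → 𝓔 → ℝ) (hPpos : ∀ w e, 0 < P w e)
    (θ' : 𝓔 → ℝ) (hθ'pos : ∀ e, 0 < θ' e) (hθ'sum : ∑ e : 𝓔, θ' e = 1)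
    {M : ℕ} (hM : 1 ≤ M) (z : Fin M → 𝓩) :
    loglik P z (babe P z θ') ≥ loglik P z θ' := by
  have hθpos := babe_pos hPpos hθ'pos hM z
  have hgibbs : 0 ≤ ∑ e, babe P z θ' e * (log (babe P z θ' e) - log (θ' e)) :=
    sum_mul_log_sub_nonneg hθpos hθ'pos <| by
      rw [hθ'sum, sum_babe_eq_one (fun w => (sum_mul_pos_of_pos (hPpos w) hθ'pos).ne') hM z]
  have hascent := Qsur_sub_Qsur_le_loglik_sub hPpos hθ'pos z hθpos
  rw [Qsur_babe_sub_Qsur] at hascent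
  linarith [mul_nonneg (Nat.cast_nonneg M : (0 : ℝ) ≤ M) hgibbs]

theorem stmt8 {𝓔 𝓩 : Type*} [Fintype 𝓔] [Fintype 𝓩] [Nonempty 𝓔] [Nonempty 𝓩]
    (P : 𝓩 → 𝓔 → ℝ) (hPpos : ∀ w e, 0 < P w e) (hPsum : ∀ e, ∑ w : 𝓩, P w e = 1)
    (θ' : 𝓔 → ℝ) (hθ'pos : ∀ e, 0 < θ' e) (hθ'sum : ∑ e : 𝓔, θ' e = 1)
    {M : ℕ} (hM : 1 ≤ M) (z : Fin M → 𝓩) :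
    loglik P z (babe P z θ') ≥ loglik P z θ' :=
  stmt8_general P hPpos θ' hθ'pos hθ'sum hM z
end

section
/- (Uniqueness of the maximum-likelihood estimate for invertible bias matrices.) Let 𝓔 and 𝓩 be nonempty finite types, P a channel, and z : Fin M → 𝓩 samples such that every w ∈ 𝓩 occurs among the samples (φ(w) > 0 for all w). Assume that the linear map (ℝ^𝓔 → ℝ^𝓩) sending θ to (w ↦ Σ_e P w e · θ e) is injective. Let D be the set of distributions θ on 𝓔 with Σ_e P w e · θ e > 0 for all w ∈ 𝓩. If θ₁, θ₂ ∈ D both maximize L over D (i.e. L(θⱼ) ≥ L(θ) for every θ ∈ D, for j = 1, 2), then θ₁ = θ₂. -/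
/-!
The log-likelihood is a sum of logarithms of the linear functionals `θ ↦ ∑ e, P w e * θ e`,
hence concave on the convex set of feasible distributions. If two maximizers had different
images under the injective bias map, they would differ at some `w`, which occurs among the
samples; strict concavity of `log` there makes their midpoint strictly better than both.
-/

open Finset Real Filter
open scoped Classical

theorem log_add_log_div_two_le {a b : ℝ} (ha : 0 < a) (hb : 0 < b) :
    (log a + log b) / 2 ≤ log ((a + b) / 2) := by
  have h := strictConcaveOn_log_Ioi.concaveOn.2 (Set.mem_Ioi.2 ha) (Set.mem_Ioi.2 hb)
    (by norm_num : (0 : ℝ) ≤ 1 / 2) (by norm_num : (0 : ℝ) ≤ 1 / 2) (by norm_num)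
  rw [show (a + b) / 2 = 1 / 2 * a + 1 / 2 * b by ring]
  simp only [smul_eq_mul] at h
  linarith

theorem log_add_log_div_two_lt {a b : ℝ} (ha : 0 < a) (hb : 0 < b) (hab : a ≠ b) :
    (log a + log b) / 2 < log ((a + b) / 2) := by
  have h := strictConcaveOn_log_Ioi.2 (Set.mem_Ioi.2 ha) (Set.mem_Ioi.2 hb) hab
    (by norm_num : (0 : ℝ) < 1 / 2) (by norm_num : (0 : ℝ) < 1 / 2) (by norm_num)
  rw [show (a + b) / 2 = 1 / 2 * a + 1 / 2 * b by ring]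
  simp only [smul_eq_mul] at h
  linarith

theorem sum_log_add_sum_log_div_two_lt {ι : Type*} (s : Finset ι) {f g : ι → ℝ}
    (hf : ∀ i ∈ s, 0 < f i) (hg : ∀ i ∈ s, 0 < g i) (hne : ∃ i ∈ s, f i ≠ g i) :
    (∑ i ∈ s, log (f i) + ∑ i ∈ s, log (g i)) / 2 < ∑ i ∈ s, log ((f i + g i) / 2) := by
  rw [← sum_add_distrib, sum_div]
  obtain ⟨j, hj, hfg⟩ := hne
  exact sum_lt_sum (fun i hi ↦ log_add_log_div_two_le (hf i hi) (hg i hi))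
    ⟨j, hj, log_add_log_div_two_lt (hf j hj) (hg j hj) hfg⟩

section Likelihood

variable {𝓔 𝓩 : Type*} [Fintype 𝓔]

/-- Membership in the set `D` of the statement. -/
def IsFeasible (P : 𝓩 → 𝓔 → ℝ) (θ : 𝓔 → ℝ) : Prop :=
  (∀ e, 0 ≤ θ e) ∧ ∑ e, θ e = 1 ∧ ∀ w, 0 < ∑ e, P w e * θ e

theorem sum_mul_add_div_two (P : 𝓩 → 𝓔 → ℝ) (θ₁ θ₂ : 𝓔 → ℝ) (w : 𝓩) :
    ∑ e, P w e * ((θ₁ e + θ₂ e) / 2) = (∑ e, P w e * θ₁ e + ∑ e, P w e * θ₂ e) / 2 := by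
  simp only [mul_add, add_div, sum_add_distrib, mul_div_assoc', sum_div]

theorem IsFeasible.add_div_two {P : 𝓩 → 𝓔 → ℝ} {θ₁ θ₂ : 𝓔 → ℝ} (h₁ : IsFeasible P θ₁)
    (h₂ : IsFeasible P θ₂) : IsFeasible P fun e ↦ (θ₁ e + θ₂ e) / 2 := by
  obtain ⟨hnn₁, hsum₁, hpos₁⟩ := h₁
  obtain ⟨hnn₂, hsum₂, hpos₂⟩ := h₂
  refine ⟨fun e ↦ by linarith [hnn₁ e, hnn₂ e], ?_, fun w ↦ ?_⟩
  · rw [← sum_div, sum_add_distrib, hsum₁, hsum₂]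
    norm_num
  · rw [sum_mul_add_div_two]
    linarith [hpos₁ w, hpos₂ w]

theorem loglik_add_loglik_div_two_lt {P : 𝓩 → 𝓔 → ℝ} {M : ℕ} {z : Fin M → 𝓩}
    {θ₁ θ₂ : 𝓔 → ℝ} (hpos₁ : ∀ w, 0 < ∑ e, P w e * θ₁ e) (hpos₂ : ∀ w, 0 < ∑ e, P w e * θ₂ e)
    (hne : ∃ i, ∑ e, P (z i) e * θ₁ e ≠ ∑ e, P (z i) e * θ₂ e) :
    (loglik P z θ₁ + loglik P z θ₂) / 2 < loglik P z fun e ↦ (θ₁ e + θ₂ e) / 2 := by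
  simp only [loglik, sum_mul_add_div_two]
  obtain ⟨i, hi⟩ := hne
  exact sum_log_add_sum_log_div_two_lt _ (fun i _ ↦ hpos₁ (z i)) (fun i _ ↦ hpos₂ (z i))
    ⟨i, mem_univ i, hi⟩

end Likelihood

theorem exists_eq_of_emp_pos {𝓩 : Type*} {M : ℕ} {z : Fin M → 𝓩} {w : 𝓩} (h : 0 < emp z w) :
    ∃ i, z i = w := by
  by_contra! hw
  simp [emp, filter_false_of_mem fun i _ ↦ hw i] at h

theorem stmt11_general {𝓔 𝓩 : Type*} [Fintype 𝓔] [Fintype 𝓩]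
    (P : 𝓩 → 𝓔 → ℝ) {M : ℕ} (z : Fin M → 𝓩)
    (hfreq : ∀ w : 𝓩, 0 < emp z w)
    (hinj : Function.Injective (fun (θ : 𝓔 → ℝ) (w : 𝓩) => ∑ e : 𝓔, P w e * θ e))
    (θ₁ : 𝓔 → ℝ) (hθ₁nn : ∀ e, 0 ≤ θ₁ e) (hθ₁sum : ∑ e : 𝓔, θ₁ e = 1)
    (hθ₁pos : ∀ w : 𝓩, 0 < ∑ e : 𝓔, P w e * θ₁ e)
    (θ₂ : 𝓔 → ℝ) (hθ₂nn : ∀ e, 0 ≤ θ₂ e) (hθ₂sum : ∑ e : 𝓔, θ₂ e = 1)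
    (hθ₂pos : ∀ w : 𝓩, 0 < ∑ e : 𝓔, P w e * θ₂ e)
    (hmax₁ : ∀ θ : 𝓔 → ℝ, (∀ e, 0 ≤ θ e) → (∑ e : 𝓔, θ e = 1) →
      (∀ w : 𝓩, 0 < ∑ e : 𝓔, P w e * θ e) → loglik P z θ ≤ loglik P z θ₁)
    (hmax₂ : ∀ θ : 𝓔 → ℝ, (∀ e, 0 ≤ θ e) → (∑ e : 𝓔, θ e = 1) →
      (∀ w : 𝓩, 0 < ∑ e : 𝓔, P w e * θ e) → loglik P z θ ≤ loglik P z θ₂) :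
    θ₁ = θ₂ := by
  by_contra hne
  obtain ⟨w, hw⟩ := Function.ne_iff.1 (hinj.ne hne)
  obtain ⟨i, rfl⟩ := exists_eq_of_emp_pos (hfreq w)
  have hmid : IsFeasible P fun e ↦ (θ₁ e + θ₂ e) / 2 :=
    IsFeasible.add_div_two ⟨hθ₁nn, hθ₁sum, hθ₁pos⟩ ⟨hθ₂nn, hθ₂sum, hθ₂pos⟩
  have hlt := loglik_add_loglik_div_two_lt (z := z) hθ₁pos hθ₂pos ⟨i, hw⟩
  linarith [hmax₁ _ hmid.1 hmid.2.1 hmid.2.2, hmax₂ _ hmid.1 hmid.2.1 hmid.2.2,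
    hmax₁ θ₂ hθ₂nn hθ₂sum hθ₂pos, hmax₂ θ₁ hθ₁nn hθ₁sum hθ₁pos]

theorem stmt11 {𝓔 𝓩 : Type*} [Fintype 𝓔] [Fintype 𝓩] [Nonempty 𝓔] [Nonempty 𝓩]
    (P : 𝓩 → 𝓔 → ℝ) (hPnn : ∀ w e, 0 ≤ P w e) (hPsum : ∀ e, ∑ w : 𝓩, P w e = 1)
    {M : ℕ} (hM : 1 ≤ M) (z : Fin M → 𝓩)
    (hfreq : ∀ w : 𝓩, 0 < emp z w)
    (hinj : Function.Injective (fun (θ : 𝓔 → ℝ) (w : 𝓩) => ∑ e : 𝓔, P w e * θ e))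
    (θ₁ : 𝓔 → ℝ) (hθ₁nn : ∀ e, 0 ≤ θ₁ e) (hθ₁sum : ∑ e : 𝓔, θ₁ e = 1)
    (hθ₁pos : ∀ w : 𝓩, 0 < ∑ e : 𝓔, P w e * θ₁ e)
    (θ₂ : 𝓔 → ℝ) (hθ₂nn : ∀ e, 0 ≤ θ₂ e) (hθ₂sum : ∑ e : 𝓔, θ₂ e = 1)
    (hθ₂pos : ∀ w : 𝓩, 0 < ∑ e : 𝓔, P w e * θ₂ e)
    (hmax₁ : ∀ θ : 𝓔 → ℝ, (∀ e, 0 ≤ θ e) → (∑ e : 𝓔, θ e = 1) →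
      (∀ w : 𝓩, 0 < ∑ e : 𝓔, P w e * θ e) → loglik P z θ ≤ loglik P z θ₁)
    (hmax₂ : ∀ θ : 𝓔 → ℝ, (∀ e, 0 ≤ θ e) → (∑ e : 𝓔, θ e = 1) →
      (∀ w : 𝓩, 0 < ∑ e : 𝓔, P w e * θ e) → loglik P z θ ≤ loglik P z θ₂) :
    θ₁ = θ₂ :=
  stmt11_general P z hfreq hinj θ₁ hθ₁nn hθ₁sum hθ₁pos θ₂ hθ₂nn hθ₂sum hθ₂pos hmax₁ hmax₂
end

section
/- (Theorem 3 / soundness of BaBE.) Let 𝓔 and 𝓩 be nonempty finite types, P a channel with P w e > 0 for all w ∈ 𝓩 and e ∈ 𝓔, and z : Fin M → 𝓩 samples such that every w ∈ 𝓩 occurs among the samples (φ(w) > 0 for all w). Assume the linear map (ℝ^𝓔 → ℝ^𝓩) sending θ to (w ↦ Σ_e P w e · θ e) is injective. Define the BaBE iterates by θ⁽⁰⁾ = the uniform distribution on 𝓔 and θ⁽ᵗ⁺¹⁾ = T(θ⁽ᵗ⁾). Then there exists a distribution θ* on 𝓔 such that θ⁽ᵗ⁾ e → θ* e as t → ∞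 for every e ∈ 𝓔, and θ* is the maximum-likelihood estimate: L(θ*) ≥ L(θ) for every distribution θ on 𝓔 with Σ_e P w e · θ e > 0 for all w ∈ 𝓩. -/
/-!
BaBE is the EM iteration for the mixture weights `θ` of the channel `P`, with the empirical
distribution `φ` of the samples as data. The normalised log-likelihood
`ℓ(θ) = ∑ w, φ w * log (Pθ)(w)` is continuous on the compact simplex, so it has a maximiser `θ*`;
it is strictly concave there because `θ ↦ Pθ` is injective and `φ > 0`, so `θ*` is unique.
Moving from `θ*` towards a vertex gives the first-order conditions
`F(θ*) e := ∑ w, φ w * P w e / (Pθ*)(w) ≤ 1`, with equality on the support of `θ*`. With these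
weights Jensen's inequality gives `ℓ(θ*) - ℓ(θ) ≤ ∑ e, θ* e * log (T(θ) e / θ e)`, so the
cross-entropy `∑ e, θ* e * log θ⁽ᵗ⁾ e ≤ 0` increases at each step by at least the gap
`ℓ(θ*) - ℓ(θ⁽ᵗ⁾)`. The gaps are therefore summable, `ℓ(θ⁽ᵗ⁾) → ℓ(θ*)`, and by compactness and
uniqueness of the maximiser `θ⁽ᵗ⁾ → θ*`.
-/

open Finset Real Filter
open scoped Classical

theorem IsCompact.tendsto_nhds_of_unique_isMaxOn {X Y ι : Type*} [TopologicalSpace X]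
    [TopologicalSpace Y] [T2Space Y] [Preorder Y] {K : Set X} {f : X → Y} {x : X}
    {l : Filter ι} {u : ι → X} (hK : IsCompact K) (hf : ContinuousOn f K) (hx : IsMaxOn f K x)
    (huniq : ∀ y ∈ K, IsMaxOn f K y → y = x) (hu : ∀ᶠ i in l, u i ∈ K)
    (hfu : Tendsto (f ∘ u) l (nhds (f x))) : Tendsto u l (nhds x) := by
  refine hK.tendsto_nhds_of_unique_mapClusterPt hu fun y hy hcl => huniq y hy ?_
  have hfy : MapClusterPt (f y) l (f ∘ u) :=
    hcl.tendsto_comp' ((hf y hy).mono_left (inf_le_inf_left _ (le_principal_iff.2 hu)))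
  have hxy : f y = f x := eq_of_nhds_neBot (hfy.neBot.mono (inf_le_inf_left _ hfu))
  exact fun z hz => (hx hz).trans_eq hxy.symm

namespace BaBE

variable {𝓔 𝓩 : Type*} [Fintype 𝓔]

noncomputable section

def marginal (P : 𝓩 → 𝓔 → ℝ) (θ : 𝓔 → ℝ) (w : 𝓩) : ℝ :=
  ∑ e, P w e * θ e

def avgLogLik [Fintype 𝓩] (P : 𝓩 → 𝓔 → ℝ) (φ : 𝓩 → ℝ) (θ : 𝓔 → ℝ) : ℝ :=
  ∑ w, φ w * Real.log (marginal P θ w)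

def emStep [Fintype 𝓩] (P : 𝓩 → 𝓔 → ℝ) (φ : 𝓩 → ℝ) (θ : 𝓔 → ℝ) (e : 𝓔) : ℝ :=
  ∑ w, φ w * West P θ w e

def emFactor [Fintype 𝓩] (P : 𝓩 → 𝓔 → ℝ) (φ : 𝓩 → ℝ) (θ : 𝓔 → ℝ) (e : 𝓔) : ℝ :=
  ∑ w, φ w * P w e / marginal P θ w

end

lemma babe_eq_emStep [Fintype 𝓩] (P : 𝓩 → 𝓔 → ℝ) {M : ℕ} (z : Fin M → 𝓩) :
    babe P z = emStep P (emp z) := rfl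

lemma marginal_pos {P : 𝓩 → 𝓔 → ℝ} (hP : ∀ w e, 0 < P w e) {θ : 𝓔 → ℝ}
    (hθ : θ ∈ stdSimplex ℝ 𝓔) (w : 𝓩) : 0 < marginal P θ w := by
  obtain ⟨e, -, he⟩ : ∃ e ∈ univ, 0 < θ e :=
    exists_lt_of_sum_lt (by simp [hθ.2] : ∑ _e : 𝓔, (0 : ℝ) < ∑ e, θ e)
  exact Finset.sum_pos' (fun e _ => mul_nonneg (hP w e).le (hθ.1 e))
    ⟨e, mem_univ e, mul_pos (hP w e) he⟩

lemma marginal_smul_add_smul (P : 𝓩 → 𝓔 → ℝ) (x y : 𝓔 → ℝ) (a b : ℝ) (w : 𝓩) :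
    marginal P (a • x + b • y) w = a * marginal P x w + b * marginal P y w := by
  simp only [marginal, Pi.add_apply, Pi.smul_apply, smul_eq_mul, mul_add, sum_add_distrib, mul_sum]
  congr 1 <;> exact sum_congr rfl fun e _ => by ring

lemma emStep_eq_mul_emFactor [Fintype 𝓩] (P : 𝓩 → 𝓔 → ℝ) (φ : 𝓩 → ℝ) (θ : 𝓔 → ℝ) (e : 𝓔) :
    emStep P φ θ e = θ e * emFactor P φ θ e := by
  simp only [emStep, emFactor, West, mul_sum]
  exact sum_congr rfl fun w _ => by unfold marginal; ring

lemma sum_mul_div_marginal (P : 𝓩 → 𝓔 → ℝ) {θ : 𝓔 → ℝ} {w : 𝓩} (hθ : marginal P θ w ≠ 0)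
    (c : ℝ) : ∑ e, θ e * (c * P w e / marginal P θ w) = c := by
  have h : ∑ e, θ e * (c * P w e / marginal P θ w) = c / marginal P θ w * ∑ e, P w e * θ e := by
    rw [mul_sum]
    exact sum_congr rfl fun e _ => by ring
  exact h.trans (div_mul_cancel₀ _ hθ)

lemma sum_mul_emFactor [Fintype 𝓩] (P : 𝓩 → 𝓔 → ℝ) {φ : 𝓩 → ℝ} (hφ : ∑ w, φ w = 1)
    {θ : 𝓔 → ℝ} (hθ : ∀ w, marginal P θ w ≠ 0) : ∑ e, θ e * emFactor P φ θ e = 1 := by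
  simp only [emFactor, mul_sum]
  rw [sum_comm, ← hφ]
  exact sum_congr rfl fun w _ => sum_mul_div_marginal P (hθ w) (φ w)

lemma loglik_eq_mul_avgLogLik [Fintype 𝓩] (P : 𝓩 → 𝓔 → ℝ) {M : ℕ} (z : Fin M → 𝓩)
    (θ : 𝓔 → ℝ) : loglik P z θ = M * avgLogLik P (emp z) θ := by
  rcases Nat.eq_zero_or_pos M with rfl | hM
  · simp [loglik]
  refine (sum_fiberwise' univ z fun w => Real.log (marginal P θ w)).symm.trans ?_
  rw [avgLogLik, mul_sum]
  refine sum_congr rfl fun w _ => ?_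
  rw [sum_const, nsmul_eq_mul, emp]
  field_simp

lemma sum_emp [Fintype 𝓩] {M : ℕ} (hM : M ≠ 0) (z : Fin M → 𝓩) : ∑ w, emp z w = 1 := by
  simp only [emp, ← sum_div, ← Nat.cast_sum, ← card_eq_sum_card_fiberwise fun i _ => mem_univ (z i),
    card_univ, Fintype.card_fin]
  exact div_self (Nat.cast_ne_zero.2 hM)

section

variable [Fintype 𝓩] {P : 𝓩 → 𝓔 → ℝ} {φ : 𝓩 → ℝ}

lemma emFactor_pos (hP : ∀ w e, 0 < P w e) (hφ : ∀ w, 0 ≤ φ w) (hφ1 : ∑ w, φ w = 1)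
    {θ : 𝓔 → ℝ} (hθ : θ ∈ stdSimplex ℝ 𝓔) (e : 𝓔) : 0 < emFactor P φ θ e := by
  obtain ⟨w, -, hw⟩ : ∃ w ∈ univ, 0 < φ w :=
    exists_lt_of_sum_lt (by simp [hφ1] : ∑ _w : 𝓩, (0 : ℝ) < ∑ w, φ w)
  refine sum_pos' (fun w _ => div_nonneg (mul_nonneg (hφ w) (hP w e).le)
    (marginal_pos hP hθ w).le) ⟨w, mem_univ w, ?_⟩
  exact div_pos (mul_pos hw (hP w e)) (marginal_pos hP hθ w)

lemma emStep_mem_stdSimplex (hP : ∀ w e, 0 < P w e) (hφ : ∀ w, 0 ≤ φ w)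
    (hφ1 : ∑ w, φ w = 1) {θ : 𝓔 → ℝ} (hθ : θ ∈ stdSimplex ℝ 𝓔) :
    emStep P φ θ ∈ stdSimplex ℝ 𝓔 := by
  simp only [stdSimplex, Set.mem_ofPred_eq, emStep_eq_mul_emFactor]
  exact ⟨fun e => mul_nonneg (hθ.1 e) (emFactor_pos hP hφ hφ1 hθ e).le,
    sum_mul_emFactor P hφ1 fun w => (marginal_pos hP hθ w).ne'⟩

lemma emStep_pos (hP : ∀ w e, 0 < P w e) (hφ : ∀ w, 0 ≤ φ w) (hφ1 : ∑ w, φ w = 1)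
    {θ : 𝓔 → ℝ} (hθ : θ ∈ stdSimplex ℝ 𝓔) (hθpos : ∀ e, 0 < θ e) (e : 𝓔) :
    0 < emStep P φ θ e := by
  rw [emStep_eq_mul_emFactor]
  exact mul_pos (hθpos e) (emFactor_pos hP hφ hφ1 hθ e)

lemma continuousOn_avgLogLik (hP : ∀ w e, 0 < P w e) (φ : 𝓩 → ℝ) :
    ContinuousOn (avgLogLik P φ) (stdSimplex ℝ 𝓔) := by
  refine continuousOn_finsetSum _ fun w _ => continuousOn_const.mul (ContinuousOn.log ?_ ?_)
  · exact (continuous_finsetSum _ fun e _ => continuous_const.mul (continuous_apply e)).continuousOn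
  · exact fun θ hθ => (marginal_pos hP hθ w).ne'

lemma strictConcaveOn_avgLogLik (hP : ∀ w e, 0 < P w e) (hφ : ∀ w, 0 < φ w)
    (hinj : Function.Injective (marginal P)) :
    StrictConcaveOn ℝ (stdSimplex ℝ 𝓔) (avgLogLik P φ) := by
  refine ⟨convex_stdSimplex ℝ 𝓔, fun x hx y hy hxy a b ha hb hab => ?_⟩
  obtain ⟨w₀, hw₀⟩ := Function.ne_iff.mp fun h => hxy (hinj h)
  simp only [avgLogLik, smul_eq_mul, mul_sum, ← sum_add_distrib, marginal_smul_add_smul]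
  have hlog := strictConcaveOn_log_Ioi
  refine sum_lt_sum (fun w _ => ?_) ⟨w₀, mem_univ w₀, ?_⟩
  · have := hlog.concaveOn.2 (marginal_pos hP hx w) (marginal_pos hP hy w) ha.le hb.le hab
    simp only [smul_eq_mul] at this
    nlinarith [hφ w]
  · have := hlog.2 (marginal_pos hP hx w₀) (marginal_pos hP hy w₀) hw₀ ha hb hab
    simp only [smul_eq_mul] at this
    nlinarith [hφ w₀]

lemma emFactor_le_one_of_isMaxOn (hP : ∀ w e, 0 < P w e) (hφ1 : ∑ w, φ w = 1) {θs : 𝓔 → ℝ}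
    (hθs : θs ∈ stdSimplex ℝ 𝓔) (hmax : IsMaxOn (avgLogLik P φ) (stdSimplex ℝ 𝓔) θs) (e : 𝓔) :
    emFactor P φ θs e ≤ 1 := by
  set A := marginal P θs with hAdef
  have hA : ∀ w, 0 < A w := marginal_pos hP hθs
  have hv : ∀ w, marginal P (Pi.single e 1) w = P w e := fun w => by
    simp [marginal, Pi.single_apply]
  set f : ℝ → ℝ := fun s => ∑ w, φ w * Real.log ((1 - s) * A w + s * P w e)
  have hf : ∀ s, f s = avgLogLik P φ ((1 - s) • θs + s • Pi.single e 1) := fun s => by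
    simp only [f, avgLogLik, marginal_smul_add_smul, hv, A]
  have hmaxOn : IsLocalMaxOn f (Set.Icc 0 1) 0 := by
    refine IsMaxOn.localize fun s hs => ?_
    rw [Set.mem_ofPred_eq, hf, hf, sub_zero, one_smul, zero_smul, add_zero]
    exact hmax (convex_stdSimplex ℝ 𝓔 hθs (single_mem_stdSimplex ℝ e) (by linarith [hs.2]) hs.1
      (by ring))
  have hderiv : HasDerivAt f (∑ w, φ w * ((P w e - A w) / A w)) 0 := by
    refine HasDerivAt.fun_sum fun w _ => HasDerivAt.const_mul _ ?_
    have hlin : HasDerivAt (fun s => (1 - s) * A w + s * P w e) (P w e - A w) 0 :=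
      ((((hasDerivAt_id (0 : ℝ)).const_sub 1).mul_const (A w)).add
        ((hasDerivAt_id (0 : ℝ)).mul_const (P w e))).congr_deriv (by ring)
    simpa using hlin.log (by simpa using (hA w).ne')
  have hslope : ∑ w, φ w * ((P w e - A w) / A w) ≤ 0 := by
    simpa using hmaxOn.hasFDerivWithinAt_nonpos hderiv.hasDerivWithinAt.hasFDerivWithinAt
      (mem_posTangentConeAt_of_segment_subset (by simp [segment_eq_Icc]) : (1 : ℝ) ∈ _)
  have hsplit : ∑ w, φ w * ((P w e - A w) / A w) = emFactor P φ θs e - 1 := by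
    rw [emFactor, ← hAdef, ← hφ1, ← sum_sub_distrib]
    exact sum_congr rfl fun w _ => by field_simp [(hA w).ne']
  linarith

lemma emFactor_eq_one_of_isMaxOn (hP : ∀ w e, 0 < P w e) (hφ1 : ∑ w, φ w = 1) {θs : 𝓔 → ℝ}
    (hθs : θs ∈ stdSimplex ℝ 𝓔) (hmax : IsMaxOn (avgLogLik P φ) (stdSimplex ℝ 𝓔) θs) {e : 𝓔}
    (he : 0 < θs e) : emFactor P φ θs e = 1 := by
  have hle := emFactor_le_one_of_isMaxOn hP hφ1 hθs hmax
  have hsum : ∑ x, θs x * (1 - emFactor P φ θs x) = 0 := by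
    simp only [mul_sub, mul_one, sum_sub_distrib, hθs.2,
      sum_mul_emFactor P hφ1 fun w => (marginal_pos hP hθs w).ne', sub_self]
  have h := (sum_eq_zero_iff_of_nonneg fun x _ => mul_nonneg (hθs.1 x) (sub_nonneg.2 (hle x))).1
    hsum e (mem_univ e)
  linarith [(mul_eq_zero.1 h).resolve_left he.ne']

lemma avgLogLik_sub_le_sum_mul_log_emFactor (hP : ∀ w e, 0 < P w e) (hφ : ∀ w, 0 ≤ φ w)
    (hφ1 : ∑ w, φ w = 1) {θs : 𝓔 → ℝ} (hθs : θs ∈ stdSimplex ℝ 𝓔)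
    (hmax : IsMaxOn (avgLogLik P φ) (stdSimplex ℝ 𝓔) θs) {θ : 𝓔 → ℝ} (hθ : θ ∈ stdSimplex ℝ 𝓔) :
    avgLogLik P φ θs - avgLogLik P φ θ ≤ ∑ e, θs e * Real.log (emFactor P φ θ e) := by
  set A := marginal P θs with hAdef
  set B := marginal P θ with hBdef
  have hA : ∀ w, 0 < A w := marginal_pos hP hθs
  have hB : ∀ w, 0 < B w := marginal_pos hP hθ
  set q : 𝓔 → 𝓩 → ℝ := fun e w => φ w * P w e / A w
  have hlhs : avgLogLik P φ θs - avgLogLik P φ θ =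
      ∑ e, θs e * ∑ w, q e w * Real.log (A w / B w) := by
    simp only [avgLogLik, ← sum_sub_distrib, mul_sum]
    rw [sum_comm]
    refine sum_congr rfl fun w _ => ?_
    calc φ w * Real.log (A w) - φ w * Real.log (B w) = φ w * Real.log (A w / B w) := by
          rw [Real.log_div (hA w).ne' (hB w).ne']; ring
      _ = (∑ e, θs e * q e w) * Real.log (A w / B w) := by
          rw [sum_mul_div_marginal P (hA w).ne' (φ w)]
      _ = ∑ e, θs e * (q e w * Real.log (A w / B w)) := by
          rw [sum_mul]; exact sum_congr rfl fun e _ => by ring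
  rw [hlhs]
  refine sum_le_sum fun e _ => ?_
  rcases (hθs.1 e).eq_or_lt with he | he
  · simp [← he]
  refine mul_le_mul_of_nonneg_left ?_ he.le
  -- at a maximizer the weights `q e` form a probability vector, so Jensen applies
  have hq1 : ∑ w, q e w = 1 := emFactor_eq_one_of_isMaxOn hP hφ1 hθs hmax he
  have hjensen := strictConcaveOn_log_Ioi.concaveOn.le_map_sum
    (fun w _ => div_nonneg (mul_nonneg (hφ w) (hP w e).le) (hA w).le) hq1
    (fun w _ => div_pos (hA w) (hB w))
  have hratio : ∑ w, q e w * (A w / B w) = emFactor P φ θ e := by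
    rw [emFactor, ← hBdef]
    exact sum_congr rfl fun w _ => by simp only [q]; field_simp [(hA w).ne', (hB w).ne']
  exact hjensen.trans_eq (congrArg Real.log hratio)

lemma tendsto_avgLogLik_emStep (hP : ∀ w e, 0 < P w e) (hφ : ∀ w, 0 ≤ φ w)
    (hφ1 : ∑ w, φ w = 1) {θs : 𝓔 → ℝ} (hθs : θs ∈ stdSimplex ℝ 𝓔)
    (hmax : IsMaxOn (avgLogLik P φ) (stdSimplex ℝ 𝓔) θs) {θ : ℕ → 𝓔 → ℝ}
    (hθ : ∀ t, θ t ∈ stdSimplex ℝ 𝓔) (hθpos : ∀ t e, 0 < θ t e)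
    (hstep : ∀ t, θ (t + 1) = emStep P φ (θ t)) :
    Tendsto (fun t => avgLogLik P φ (θ t)) atTop (nhds (avgLogLik P φ θs)) := by
  set V : ℕ → ℝ := fun t => ∑ e, θs e * Real.log (θ t e)
  have hV : ∀ t, V t ≤ 0 := fun t => sum_nonpos fun e _ =>
    mul_nonpos_of_nonneg_of_nonpos (hθs.1 e)
      (Real.log_nonpos (hθpos t e).le (mem_Icc_of_mem_stdSimplex (hθ t) e).2)
  set gap : ℕ → ℝ := fun t => avgLogLik P φ θs - avgLogLik P φ (θ t)
  have hgap : ∀ t, gap t ≤ V (t + 1) - V t := by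
    intro t
    refine (avgLogLik_sub_le_sum_mul_log_emFactor hP hφ hφ1 hθs hmax (hθ t)).trans_eq ?_
    simp only [V, ← sum_sub_distrib, ← mul_sub]
    refine sum_congr rfl fun e _ => ?_
    have hF := emFactor_pos hP hφ hφ1 (hθ t) e
    rw [hstep, emStep_eq_mul_emFactor, Real.log_mul (hθpos t e).ne' hF.ne', add_sub_cancel_left]
  have hsummable : Summable gap := by
    refine summable_of_sum_range_le (c := -V 0) (fun t => sub_nonneg.2 (hmax (hθ t))) fun n => ?_
    calc ∑ t ∈ range n, gap t ≤ ∑ t ∈ range n, (V (t + 1) - V t) := sum_le_sum fun t _ => hgap t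
      _ = V n - V 0 := sum_range_sub V n
      _ ≤ -V 0 := by linarith [hV n]
  simpa [gap] using (tendsto_const_nhds (x := avgLogLik P φ θs)).sub hsummable.tendsto_atTop_zero

end

end BaBE

open BaBE

theorem stmt12_general {𝓔 𝓩 : Type*} [Fintype 𝓔] [Fintype 𝓩] [Nonempty 𝓔]
    (P : 𝓩 → 𝓔 → ℝ) (hPpos : ∀ w e, 0 < P w e)
    {M : ℕ} (hM : 1 ≤ M) (z : Fin M → 𝓩)
    (hfreq : ∀ w : 𝓩, 0 < emp z w)
    (hinj : Function.Injective (fun (θ : 𝓔 → ℝ) (w : 𝓩) => ∑ e : 𝓔, P w e * θ e))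
    (θseq : ℕ → 𝓔 → ℝ)
    (h0 : θseq 0 = fun _ => 1 / (Fintype.card 𝓔 : ℝ))
    (hstep : ∀ t : ℕ, θseq (t + 1) = babe P z (θseq t)) :
    ∃ θstar : 𝓔 → ℝ,
      (∀ e : 𝓔, 0 ≤ θstar e) ∧ (∑ e : 𝓔, θstar e = 1) ∧
      (∀ e : 𝓔, Tendsto (fun t : ℕ => θseq t e) atTop (nhds (θstar e))) ∧
      (∀ θ : 𝓔 → ℝ, (∀ e, 0 ≤ θ e) → (∑ e : 𝓔, θ e = 1) →
        (∀ w : 𝓩, 0 < ∑ e : 𝓔, P w e * θ e) → loglik P z θ ≤ loglik P z θstar) := by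
  have hφ : ∀ w, 0 ≤ emp z w := fun w => (hfreq w).le
  have hφ1 : ∑ w, emp z w = 1 := sum_emp (by omega) z
  have hiter : ∀ t, θseq t ∈ stdSimplex ℝ 𝓔 ∧ ∀ e, 0 < θseq t e := by
    intro t
    induction t with
    | zero => exact h0 ▸ ⟨⟨fun _ => by positivity, by simp⟩, fun _ => by positivity⟩
    | succ t ih =>
      rw [hstep, babe_eq_emStep]
      exact ⟨emStep_mem_stdSimplex hPpos hφ hφ1 ih.1, emStep_pos hPpos hφ hφ1 ih.1 ih.2⟩
  have hcont := continuousOn_avgLogLik hPpos (emp z)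
  obtain ⟨θs, hθs, hmax⟩ := (isCompact_stdSimplex ℝ 𝓔).exists_isMaxOn ⟨_, (hiter 0).1⟩ hcont
  have hconv : Tendsto θseq atTop (nhds θs) :=
    (isCompact_stdSimplex ℝ 𝓔).tendsto_nhds_of_unique_isMaxOn hcont hmax
      (fun y hy hymax =>
        (strictConcaveOn_avgLogLik hPpos hfreq hinj).eq_of_isMaxOn hymax hmax hy hθs)
      (Eventually.of_forall fun t => (hiter t).1)
      (tendsto_avgLogLik_emStep hPpos hφ hφ1 hθs hmax (fun t => (hiter t).1) (fun t => (hiter t).2)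
        hstep)
  refine ⟨θs, hθs.1, hθs.2, fun e => ((continuous_apply e).tendsto θs).comp hconv,
    fun θ hθ0 hθ1 _ => ?_⟩
  rw [loglik_eq_mul_avgLogLik, loglik_eq_mul_avgLogLik]
  exact mul_le_mul_of_nonneg_left (hmax ⟨hθ0, hθ1⟩) M.cast_nonneg

theorem stmt12 {𝓔 𝓩 : Type*} [Fintype 𝓔] [Fintype 𝓩] [Nonempty 𝓔] [Nonempty 𝓩]
    (P : 𝓩 → 𝓔 → ℝ) (hPpos : ∀ w e, 0 < P w e) (hPsum : ∀ e, ∑ w : 𝓩, P w e = 1)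
    {M : ℕ} (hM : 1 ≤ M) (z : Fin M → 𝓩)
    (hfreq : ∀ w : 𝓩, 0 < emp z w)
    (hinj : Function.Injective (fun (θ : 𝓔 → ℝ) (w : 𝓩) => ∑ e : 𝓔, P w e * θ e))
    (θseq : ℕ → 𝓔 → ℝ)
    (h0 : θseq 0 = fun _ => 1 / (Fintype.card 𝓔 : ℝ))
    (hstep : ∀ t : ℕ, θseq (t + 1) = babe P z (θseq t)) :
    ∃ θstar : 𝓔 → ℝ,
      (∀ e : 𝓔, 0 ≤ θstar e) ∧ (∑ e : 𝓔, θstar e = 1) ∧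
      (∀ e : 𝓔, Tendsto (fun t : ℕ => θseq t e) atTop (nhds (θstar e))) ∧
      (∀ θ : 𝓔 → ℝ, (∀ e, 0 ≤ θ e) → (∑ e : 𝓔, θ e = 1) →
        (∀ w : 𝓩, 0 < ∑ e : 𝓔, P w e * θ e) → loglik P z θ ≤ loglik P z θstar) :=
  stmt12_general P hPpos hM z hfreq hinj θseq h0 hstep
end
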